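/- arXiv:1509.01096 — 8 statements merged into one kernel-verified Lean document; each statement's English description precedes it below -/
import Mathlib

section
/- Let f : ℝ → ℝ be continuous with 0 ≤ s·f(s) ≤ C·|s|^{p+1} for all s, where C > 0 and p > 1. Let G(s) = ∫₀ˢ f(τ)dτ and for integer k ≥ 1 define f_k(s) = k·(G(s + 1/k) − G(s)) for s ∈ [1/k, k]. Then 0 ≤ s·f_k(s) ≤ C·2^{p+1}·|s|^{p+1} for all s ∈ [1/k, k]. -/
open MeasureTheory

theorem stmt1 (f : ℝ → ℝ) (hf : Continuous f) (C p : ℝ) (hC : 0 < C) (hp : 1 < p)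
    (hgrowth : ∀ s : ℝ, 0 ≤ s * f s ∧ s * f s ≤ C * |s| ^ (p + 1))
    (G : ℝ → ℝ) (hG : ∀ s : ℝ, G s = ∫ τ in (0:ℝ)..s, f τ)
    (k : ℕ) (hk : 1 ≤ k)
    (fk : ℝ → ℝ)
    (hfk : ∀ s ∈ Set.Icc (1 / (k:ℝ)) (k:ℝ), fk s = (k:ℝ) * (G (s + 1 / (k:ℝ)) - G s)) :
    ∀ s ∈ Set.Icc (1 / (k:ℝ)) (k:ℝ),
      0 ≤ s * fk s ∧ s * fk s ≤ C * 2 ^ (p + 1) * |s| ^ (p + 1) := by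
  intro s hs
  obtain ⟨hs1, hs2⟩ := hs
  have hk' : (1:ℝ) ≤ (k:ℝ) := by exact_mod_cast hk
  have hkpos : (0:ℝ) < k := by linarith
  have hinv : 0 < 1/(k:ℝ) := by positivity
  have hspos : 0 < s := lt_of_lt_of_le hinv hs1
  have hppos : 0 < p := by linarith
  have hGsub : G (s + 1/(k:ℝ)) - G s = ∫ τ in s..(s + 1/(k:ℝ)), f τ := by
    rw [hG, hG, intervalIntegral.integral_interval_sub_left
      (hf.intervalIntegrable _ _) (hf.intervalIntegrable _ _)]
  -- pointwise bounds on [s, s + 1/k]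
  have hfnonneg : ∀ τ ∈ Set.Icc s (s + 1/(k:ℝ)), 0 ≤ f τ := by
    intro τ hτ
    have hτpos : 0 < τ := lt_of_lt_of_le hspos hτ.1
    have := (hgrowth τ).1
    nlinarith
  have hfub : ∀ τ ∈ Set.Icc s (s + 1/(k:ℝ)), f τ ≤ C * (2*s) ^ p := by
    intro τ hτ
    have hτpos : 0 < τ := lt_of_lt_of_le hspos hτ.1
    have hτ2 : τ ≤ 2 * s := by
      have := hτ.2
      linarith [hs1]
    have h1 : τ * f τ ≤ C * |τ| ^ (p + 1) := (hgrowth τ).2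
    rw [abs_of_pos hτpos, Real.rpow_add_one hτpos.ne'] at h1
    have h2 : f τ ≤ C * τ ^ p := by
      have := mul_le_mul_of_nonneg_right h1 (le_of_lt (inv_pos.mpr hτpos))
      calc f τ = τ * f τ * τ⁻¹ := by field_simp
        _ ≤ C * (τ ^ p * τ) * τ⁻¹ := this
        _ = C * τ ^ p := by field_simp
    have h3 : τ ^ p ≤ (2*s) ^ p :=
      Real.rpow_le_rpow hτpos.le hτ2 hppos.le
    nlinarith
  have hle : s ≤ s + 1/(k:ℝ) := by linarith
  have hint_nonneg : 0 ≤ ∫ τ in s..(s + 1/(k:ℝ)), f τ :=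
    intervalIntegral.integral_nonneg hle (fun τ hτ => hfnonneg τ hτ)
  have hint_ub : (∫ τ in s..(s + 1/(k:ℝ)), f τ) ≤ (1/(k:ℝ)) * (C * (2*s) ^ p) := by
    have := intervalIntegral.integral_mono_on hle (hf.intervalIntegrable _ _)
      ((intervalIntegrable_const : IntervalIntegrable (fun _ => C * (2*s) ^ p) volume s (s + 1/(k:ℝ)))) hfub
    calc (∫ τ in s..(s + 1/(k:ℝ)), f τ) ≤ ∫ _ in s..(s + 1/(k:ℝ)), C * (2*s) ^ p := this
      _ = (1/(k:ℝ)) * (C * (2*s) ^ p) := by rw [intervalIntegral.integral_const]; simp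
  have hfk' := hfk s ⟨hs1, hs2⟩
  rw [hfk', hGsub]
  constructor
  · positivity
  · have h2p : (2:ℝ) ^ p ≤ 2 ^ (p+1) :=
      Real.rpow_le_rpow_of_exponent_le (by norm_num) (by linarith)
    have hsp : 0 < s ^ p := Real.rpow_pos_of_pos hspos p
    have key : s * ((k:ℝ) * ∫ τ in s..(s + 1/(k:ℝ)), f τ) ≤ C * 2 ^ p * s ^ (p+1) := by
      have h4 : (k:ℝ) * (∫ τ in s..(s + 1/(k:ℝ)), f τ) ≤ C * (2*s) ^ p := by
        have := mul_le_mul_of_nonneg_left hint_ub hkpos.le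
        calc (k:ℝ) * (∫ τ in s..(s + 1/(k:ℝ)), f τ)
            ≤ (k:ℝ) * ((1/(k:ℝ)) * (C * (2*s) ^ p)) := this
          _ = C * (2*s) ^ p := by field_simp
      have h5 : (2*s) ^ p = 2 ^ p * s ^ p :=
        Real.mul_rpow (by norm_num) hspos.le
      have h6 : s * s ^ p = s ^ (p+1) := by
        rw [Real.rpow_add_one hspos.ne']; ring
      calc s * ((k:ℝ) * ∫ τ in s..(s + 1/(k:ℝ)), f τ)
          ≤ s * (C * (2*s) ^ p) := by nlinarith
        _ = C * 2 ^ p * (s * s ^ p) := by rw [h5]; ring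
        _ = C * 2 ^ p * s ^ (p+1) := by rw [h6]
    have hsp1 : 0 ≤ s ^ (p+1) := (Real.rpow_pos_of_pos hspos _).le
    rw [abs_of_pos hspos]
    nlinarith [mul_le_mul_of_nonneg_right (mul_le_mul_of_nonneg_left h2p hC.le) hsp1]
end

section
/- Let f : ℝ → ℝ be continuous with 0 ≤ s·f(s) ≤ C·|s|^{p+1} for all s, where C > 0 and p > 1. Let G(s) = ∫₀ˢ f(τ)dτ and for integer k ≥ 1 define f_k(s) = −k·(G(s − 1/k) − G(s)) for s ∈ [−k, −1/k]. Then 0 ≤ s·f_k(s) ≤ C·2^{p+1}·|s|^{p+1} for all s ∈ [−k, −1/k]. -/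
open MeasureTheory

theorem stmt2 (f : ℝ → ℝ) (hf : Continuous f) (C p : ℝ) (hC : 0 < C) (hp : 1 < p)
    (hgrowth : ∀ s : ℝ, 0 ≤ s * f s ∧ s * f s ≤ C * |s| ^ (p + 1))
    (G : ℝ → ℝ) (hG : ∀ s : ℝ, G s = ∫ τ in (0:ℝ)..s, f τ)
    (k : ℕ) (hk : 1 ≤ k)
    (fk : ℝ → ℝ)
    (hfk : ∀ s ∈ Set.Icc (-(k:ℝ)) (-(1 / (k:ℝ))),
      fk s = -(k:ℝ) * (G (s - 1 / (k:ℝ)) - G s)) :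
    ∀ s ∈ Set.Icc (-(k:ℝ)) (-(1 / (k:ℝ))),
      0 ≤ s * fk s ∧ s * fk s ≤ C * 2 ^ (p + 1) * |s| ^ (p + 1) := by
  intro s hs
  obtain ⟨hs1, hs2⟩ := hs
  have hk1 : (1:ℝ) ≤ (k:ℝ) := by exact_mod_cast hk
  have hk0 : (0:ℝ) < (k:ℝ) := by linarith
  have hinv : 0 < 1/(k:ℝ) := by positivity
  have hs0 : s < 0 := lt_of_le_of_lt hs2 (by linarith)
  have hsk : 1/(k:ℝ) ≤ -s := by linarith
  set a := s - 1/(k:ℝ) with ha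
  have hab : a ≤ s := by rw [ha]; linarith
  -- pointwise bounds
  have hpt : ∀ τ ∈ Set.Icc a s, 0 ≤ s * f τ ∧ s * f τ ≤ C * 2^p * (-s)^(p+1) := by
    intro τ hτ
    have hτs : τ ≤ s := hτ.2
    have hτ0 : τ < 0 := lt_of_le_of_lt hτs hs0
    have habsτ : |τ| = -τ := abs_of_neg hτ0
    have hfτ : f τ ≤ 0 := by
      by_contra h
      push_neg at h
      have := (hgrowth τ).1
      nlinarith
    refine ⟨by nlinarith, ?_⟩
    have h1 : τ * f τ ≤ C * |τ|^(p+1) := (hgrowth τ).2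
    rw [habsτ, Real.rpow_add (by linarith : (0:ℝ) < -τ), Real.rpow_one] at h1
    have hτp : (0:ℝ) < (-τ)^p := Real.rpow_pos_of_pos (by linarith) p
    -- -f τ ≤ C * (-τ)^p
    have h2 : -f τ ≤ C * (-τ)^p := by nlinarith
    have hτ2s : -τ ≤ 2 * (-s) := by
      have := hτ.1
      rw [ha] at this
      linarith
    have h3 : (-τ)^p ≤ (2 * (-s))^p :=
      Real.rpow_le_rpow (by linarith) hτ2s (by linarith)
    rw [Real.mul_rpow (by norm_num) (by linarith)] at h3
    have hsp : (0:ℝ) < (-s)^p := Real.rpow_pos_of_pos (by linarith) p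
    have e0 : s * f τ = (-s) * (-f τ) := by ring
    have e1 : (-s) * (-f τ) ≤ (-s) * (C * (-τ)^p) :=
      mul_le_mul_of_nonneg_left h2 (by linarith)
    have e2 : (-s) * (C * (-τ)^p) ≤ (-s) * (C * (2^p * (-s)^p)) :=
      mul_le_mul_of_nonneg_left (mul_le_mul_of_nonneg_left h3 hC.le) (by linarith)
    have h4 : s * f τ ≤ C * 2^p * ((-s)^p * (-s)) := by nlinarith [e0, e1, e2]
    rw [Real.rpow_add (by linarith : (0:ℝ) < -s), Real.rpow_one]
    linarith
  -- rewrite s * fk s as an integral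
  have hGdiff : G s - G a = ∫ τ in a..s, f τ := by
    rw [hG s, hG a,
      ← intervalIntegral.integral_interval_sub_left (hf.intervalIntegrable 0 s)
        (hf.intervalIntegrable 0 a)]
  have hfk' : s * fk s = (k:ℝ) * ∫ τ in a..s, s * f τ := by
    rw [hfk s ⟨hs1, hs2⟩, intervalIntegral.integral_const_mul, ← hGdiff]
    ring
  have hint : IntervalIntegrable (fun τ => s * f τ) volume a s :=
    (continuous_const.mul hf).intervalIntegrable _ _
  have habs : |s| = -s := abs_of_neg hs0
  constructor
  · rw [hfk']
    have h0 : 0 ≤ ∫ τ in a..s, s * f τ :=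
      intervalIntegral.integral_nonneg hab (fun τ hτ => (hpt τ hτ).1)
    positivity
  · have hM : ∫ τ in a..s, s * f τ ≤ ∫ _ in a..s, C * 2^p * (-s)^(p+1) := by
      apply intervalIntegral.integral_mono_on hab hint (intervalIntegrable_const)
      exact fun τ hτ => (hpt τ hτ).2
    rw [intervalIntegral.integral_const, smul_eq_mul] at hM
    have hsa : s - a = 1/(k:ℝ) := by rw [ha]; ring
    rw [hsa] at hM
    have h5 : s * fk s ≤ C * 2^p * (-s)^(p+1) := by
      rw [hfk']
      calc (k:ℝ) * ∫ τ in a..s, s * f τ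
          ≤ (k:ℝ) * (1/(k:ℝ) * (C * 2^p * (-s)^(p+1))) := by
            apply mul_le_mul_of_nonneg_left hM (le_of_lt hk0)
        _ = C * 2^p * (-s)^(p+1) := by field_simp
    have h6 : (2:ℝ)^p ≤ (2:ℝ)^(p+1) :=
      Real.rpow_le_rpow_of_exponent_le (by norm_num) (by linarith)
    have hsp1 : (0:ℝ) < (-s)^(p+1) := Real.rpow_pos_of_pos (by linarith) _
    rw [habs]
    have h7 := mul_le_mul_of_nonneg_right (mul_le_mul_of_nonneg_left h6 hC.le) hsp1.le
    linarith
end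

section
/- Let f : ℝ → ℝ be continuous with 0 ≤ s·f(s) ≤ C·|s|^{p+1} for all s, where C > 0 and p > 1. Let G(s) = ∫₀ˢ f(τ)dτ and for integer k ≥ 1 define f_k(s) = k²·s·(G(2/k) − G(1/k)) for s ∈ [0, 1/k]. Then 0 ≤ s·f_k(s) ≤ C·2^p·|s|² for all s ∈ [0, 1/k]. -/
open MeasureTheory

theorem stmt3 (f : ℝ → ℝ) (hf : Continuous f) (C p : ℝ) (hC : 0 < C) (hp : 1 < p)
    (hgrowth : ∀ s : ℝ, 0 ≤ s * f s ∧ s * f s ≤ C * |s| ^ (p + 1))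
    (G : ℝ → ℝ) (hG : ∀ s : ℝ, G s = ∫ τ in (0:ℝ)..s, f τ)
    (k : ℕ) (hk : 1 ≤ k)
    (fk : ℝ → ℝ)
    (hfk : ∀ s ∈ Set.Icc (0:ℝ) (1 / (k:ℝ)),
      fk s = (k:ℝ) ^ 2 * s * (G (2 / (k:ℝ)) - G (1 / (k:ℝ)))) :
    ∀ s ∈ Set.Icc (0:ℝ) (1 / (k:ℝ)),
      0 ≤ s * fk s ∧ s * fk s ≤ C * 2 ^ p * |s| ^ 2 := by
  have hk0 : (0:ℝ) < k := by exact_mod_cast hk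
  have hk1 : (1:ℝ) ≤ k := by exact_mod_cast hk
  have hint : ∀ a b : ℝ, IntervalIntegrable f MeasureTheory.volume a b :=
    fun a b => hf.intervalIntegrable a b
  have hc : G (2 / (k:ℝ)) - G (1 / (k:ℝ)) = ∫ τ in (1/(k:ℝ))..(2/(k:ℝ)), f τ := by
    rw [hG, hG]
    exact intervalIntegral.integral_interval_sub_left (hint 0 (2/(k:ℝ))) (hint 0 (1/(k:ℝ)))
  have hle : (1/(k:ℝ)) ≤ 2/(k:ℝ) := by
    gcongr
    norm_num
  -- f nonneg and bounded on [1/k, 2/k]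
  have hfnn : ∀ τ ∈ Set.Icc (1/(k:ℝ)) (2/(k:ℝ)), 0 ≤ f τ := by
    intro τ hτ
    have hτ0 : 0 < τ := lt_of_lt_of_le (by positivity) hτ.1
    nlinarith [(hgrowth τ).1]
  have hM : ∀ τ ∈ Set.Icc (1/(k:ℝ)) (2/(k:ℝ)), f τ ≤ C * (2/(k:ℝ)) ^ p := by
    intro τ hτ
    have hτ0 : 0 < τ := lt_of_lt_of_le (by positivity) hτ.1
    have h1 : τ * f τ ≤ C * τ ^ (p + 1) := by
      have := (hgrowth τ).2
      rwa [abs_of_pos hτ0] at this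
    have h2 : τ ^ (p + 1) = τ ^ p * τ := by
      rw [Real.rpow_add hτ0, Real.rpow_one]
    have h3 : τ ^ p ≤ (2/(k:ℝ)) ^ p :=
      Real.rpow_le_rpow hτ0.le hτ.2 (by linarith)
    have h4 : f τ ≤ C * τ ^ p := by
      rw [h2] at h1
      exact le_of_mul_le_mul_right (by nlinarith) hτ0
    calc f τ ≤ C * τ ^ p := h4
      _ ≤ C * (2/(k:ℝ)) ^ p := by nlinarith
  have hc0 : 0 ≤ G (2 / (k:ℝ)) - G (1 / (k:ℝ)) := by
    rw [hc]
    exact intervalIntegral.integral_nonneg hle (fun τ hτ => hfnn τ hτ)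
  have hcU : G (2 / (k:ℝ)) - G (1 / (k:ℝ)) ≤ (1/(k:ℝ)) * (C * (2/(k:ℝ)) ^ p) := by
    rw [hc]
    have h1 := intervalIntegral.integral_mono_on hle (hint _ _)
      (intervalIntegrable_const (c := C * (2/(k:ℝ)) ^ p)) hM
    have h2 : (∫ _τ in (1/(k:ℝ))..(2/(k:ℝ)), (C * (2/(k:ℝ)) ^ p)) = (1/(k:ℝ)) * (C * (2/(k:ℝ)) ^ p) := by
      rw [intervalIntegral.integral_const, smul_eq_mul]; ring
    exact h1.trans h2.le
  intro s hs
  have hfks := hfk s hs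
  have hs0 : 0 ≤ s := hs.1
  have hs1 : s ≤ 1/(k:ℝ) := hs.2
  constructor
  · rw [hfks]; positivity
  · rw [hfks, abs_of_nonneg hs0]
    -- key: (k:ℝ)^2 * (1/k) * (2/k)^p ≤ 2^p
    have hkey : (k:ℝ) * (2/(k:ℝ)) ^ p ≤ 2 ^ p := by
      rw [Real.div_rpow (by norm_num) hk0.le]
      rw [mul_div_assoc', div_le_iff₀ (by positivity)]
      have : (k:ℝ) ≤ (k:ℝ) ^ p := by
        calc (k:ℝ) = (k:ℝ) ^ (1:ℝ) := (Real.rpow_one _).symm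
          _ ≤ (k:ℝ) ^ p := Real.rpow_le_rpow_of_exponent_le hk1 hp.le
      nlinarith [Real.rpow_pos_of_pos (show (0:ℝ) < 2 by norm_num) p]
    calc s * ((k:ℝ) ^ 2 * s * (G (2 / (k:ℝ)) - G (1 / (k:ℝ))))
        ≤ s * ((k:ℝ) ^ 2 * s * ((1/(k:ℝ)) * (C * (2/(k:ℝ)) ^ p))) := by
          apply mul_le_mul_of_nonneg_left _ hs0
          apply mul_le_mul_of_nonneg_left hcU (by positivity)
      _ = s ^ 2 * C * ((k:ℝ) * (2/(k:ℝ)) ^ p) := by field_simp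
      _ ≤ s ^ 2 * C * 2 ^ p := mul_le_mul_of_nonneg_left hkey (by positivity)
      _ = C * 2 ^ p * s ^ 2 := by ring
end

section
/- Let f : ℝ → ℝ be continuous with 0 ≤ s·f(s) ≤ C·|s|^{p+1} for all s, where C > 0 and p > 1. Let G(s) = ∫₀ˢ f(τ)dτ and for integer k ≥ 1 define f_k(s) = k²·s·(G(−2/k) − G(−1/k)) for s ∈ [−1/k, 0]. Then 0 ≤ s·f_k(s) ≤ C·2^p·|s|² for all s ∈ [−1/k, 0]. -/
open MeasureTheory

theorem stmt4 (f : ℝ → ℝ) (hf : Continuous f) (C p : ℝ) (hC : 0 < C) (hp : 1 < p)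
    (hgrowth : ∀ s : ℝ, 0 ≤ s * f s ∧ s * f s ≤ C * |s| ^ (p + 1))
    (G : ℝ → ℝ) (hG : ∀ s : ℝ, G s = ∫ τ in (0:ℝ)..s, f τ)
    (k : ℕ) (hk : 1 ≤ k)
    (fk : ℝ → ℝ)
    (hfk : ∀ s ∈ Set.Icc (-(1 / (k:ℝ))) (0:ℝ),
      fk s = (k:ℝ) ^ 2 * s * (G (-(2 / (k:ℝ))) - G (-(1 / (k:ℝ))))) :
    ∀ s ∈ Set.Icc (-(1 / (k:ℝ))) (0:ℝ),
      0 ≤ s * fk s ∧ s * fk s ≤ C * 2 ^ p * |s| ^ 2 := by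
  have hK : (1:ℝ) ≤ (k:ℝ) := by exact_mod_cast hk
  have hK0 : (0:ℝ) < (k:ℝ) := lt_of_lt_of_le one_pos hK
  set K : ℝ := (k:ℝ) with hKdef
  set a : ℝ := -(2 / K) with ha
  set b : ℝ := -(1 / K) with hb
  clear_value K a b
  have h1K : 0 < 1 / K := by positivity
  have h2K : 0 < 2 / K := by positivity
  have h12K : (1:ℝ) / K ≤ 2 / K := by gcongr; norm_num
  have hab : a ≤ b := by rw [ha, hb]; linarith
  have hb0 : b < 0 := by rw [hb]; linarith
  -- pointwise bounds on f on [a, b]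
  have hfle : ∀ τ ∈ Set.Icc a b, f τ ≤ 0 := by
    intro τ hτ
    have hτ0 : τ < 0 := lt_of_le_of_lt hτ.2 hb0
    by_contra h
    push_neg at h
    have := mul_neg_of_neg_of_pos hτ0 h
    linarith [(hgrowth τ).1]
  have hfge : ∀ τ ∈ Set.Icc a b, -(C * (2 / K) ^ p) ≤ f τ := by
    intro τ hτ
    have hτ0 : τ < 0 := lt_of_le_of_lt hτ.2 hb0
    have habs : |τ| = -τ := abs_of_neg hτ0
    have habs0 : 0 < |τ| := abs_pos.mpr (ne_of_lt hτ0)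
    have habs2 : |τ| ≤ 2 / K := by rw [habs]; rw [ha] at hτ; linarith [hτ.1]
    have hpow : |τ| ^ p ≤ (2 / K) ^ p :=
      Real.rpow_le_rpow (abs_nonneg τ) habs2 (by linarith)
    have hsplit : |τ| ^ (p + 1) = |τ| ^ p * |τ| := by
      rw [Real.rpow_add habs0, Real.rpow_one]
    have h2 := (hgrowth τ).2
    rw [hsplit, habs] at h2
    -- τ * f τ ≤ C * (|τ|^p * (-τ)), divide by -τ > 0
    have hfτ : -(C * |τ| ^ p) ≤ f τ := by
      rw [habs]
      have hτ' : 0 < -τ := by linarith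
      nlinarith [h2]
    have : -(C * (2/K) ^ p) ≤ -(C * |τ| ^ p) := by nlinarith
    linarith
  -- bounds on the integral
  have hint : IntervalIntegrable f volume a b := hf.intervalIntegrable a b
  have hcint : IntervalIntegrable (fun _ => -(C * (2 / K) ^ p)) volume a b :=
    intervalIntegrable_const
  have hzint : IntervalIntegrable (fun _ => (0:ℝ)) volume a b :=
    intervalIntegrable_const
  have hI1 : (∫ τ in a..b, f τ) ≤ 0 := by
    have := intervalIntegral.integral_mono_on hab hint hzint hfle
    simpa using this
  have hI2 : -(C * (2 / K) ^ p) * (1 / K) ≤ (∫ τ in a..b, f τ) := by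
    have := intervalIntegral.integral_mono_on hab hcint hint hfge
    rw [intervalIntegral.integral_const] at this
    have hba : b - a = 1 / K := by rw [ha, hb]; ring
    rw [hba, smul_eq_mul] at this
    linarith
  -- D := G a - G b
  have hD : G a - G b = -(∫ τ in a..b, f τ) := by
    rw [hG a, hG b]
    rw [intervalIntegral.integral_interval_sub_left (hf.intervalIntegrable 0 a)
      (hf.intervalIntegrable 0 b)]
    exact intervalIntegral.integral_symm a b
  have hD0 : 0 ≤ G a - G b := by rw [hD]; linarith
  have hDle : G a - G b ≤ C * (2 / K) ^ p * (1 / K) := by rw [hD]; linarith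
  -- key coefficient bound : K^2 * (C * (2/K)^p / K) ≤ C * 2^p
  have hKp : K ≤ K ^ p := by
    calc K = K ^ (1:ℝ) := (Real.rpow_one K).symm
    _ ≤ K ^ p := Real.rpow_le_rpow_of_exponent_le hK (le_of_lt hp)
  have hKp0 : 0 < K ^ p := Real.rpow_pos_of_pos hK0 p
  have hdiv : (2 / K) ^ p = 2 ^ p / K ^ p := Real.div_rpow (by norm_num) hK0.le p
  have hcoef : K ^ 2 * (C * (2 / K) ^ p * (1 / K)) ≤ C * 2 ^ p := by
    rw [hdiv]
    have h2p : (0:ℝ) < 2 ^ p := Real.rpow_pos_of_pos (by norm_num) p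
    have heq : K ^ 2 * (C * (2 ^ p / K ^ p) * (1 / K)) = C * 2 ^ p * (K / K ^ p) := by
      field_simp
    rw [heq]
    have hle1 : K / K ^ p ≤ 1 := (div_le_one hKp0).mpr hKp
    have := mul_le_mul_of_nonneg_left hle1 (mul_pos hC h2p).le
    linarith
  have hKD : K ^ 2 * (G a - G b) ≤ C * 2 ^ p := by
    have h1 : K ^ 2 * (G a - G b) ≤ K ^ 2 * (C * (2 / K) ^ p * (1 / K)) :=
      mul_le_mul_of_nonneg_left hDle (by positivity)
    linarith
  have hKD0 : 0 ≤ K ^ 2 * (G a - G b) := mul_nonneg (by positivity) hD0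
  intro s hs
  have hfks := hfk s hs
  rw [hfks]
  constructor
  · nlinarith [mul_nonneg hKD0 (sq_nonneg s)]
  · rw [sq_abs]
    nlinarith [mul_le_mul_of_nonneg_left hKD (sq_nonneg s)]
end

section
/- Let f : ℝ → ℝ be continuous with 0 ≤ s·f(s) ≤ C·|s|^{p+1} for all s, where C > 0 and p > 1. Let G(s) = ∫₀ˢ f(τ)dτ and for integer k ≥ 1 define f_k(s) = k·(G(k + 1/k) − G(k)) for all s ≥ k. Then 0 ≤ s·f_k(s) ≤ C·2^p·|s|^{p+1} for every s ≥ k. -/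
open MeasureTheory

theorem stmt5 (f : ℝ → ℝ) (hf : Continuous f) (C p : ℝ) (hC : 0 < C) (hp : 1 < p)
    (hgrowth : ∀ s : ℝ, 0 ≤ s * f s ∧ s * f s ≤ C * |s| ^ (p + 1))
    (G : ℝ → ℝ) (hG : ∀ s : ℝ, G s = ∫ τ in (0:ℝ)..s, f τ)
    (k : ℕ) (hk : 1 ≤ k)
    (fk : ℝ → ℝ)
    (hfk : ∀ s : ℝ, (k:ℝ) ≤ s → fk s = (k:ℝ) * (G ((k:ℝ) + 1 / (k:ℝ)) - G (k:ℝ))) :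
    ∀ s : ℝ, (k:ℝ) ≤ s →
      0 ≤ s * fk s ∧ s * fk s ≤ C * 2 ^ p * |s| ^ (p + 1) := by
  intro s hs
  have hk1 : (1:ℝ) ≤ (k:ℝ) := by exact_mod_cast hk
  have ha : (0:ℝ) < (k:ℝ) := lt_of_lt_of_le one_pos hk1
  set a : ℝ := (k:ℝ) with ha_def
  have hs0 : 0 < s := lt_of_lt_of_le ha hs
  have hb : a ≤ a + 1/a := le_add_of_nonneg_right (by positivity)
  have hba : a + 1/a ≤ 2*a := by
    have h1 : 1/a ≤ a := by rw [div_le_iff₀ ha]; nlinarith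
    linarith
  have hint : ∀ u v : ℝ, IntervalIntegrable f volume u v :=
    fun u v => hf.intervalIntegrable u v
  have hGdiff : G (a + 1/a) - G a = ∫ τ in a..(a+1/a), f τ := by
    rw [hG, hG, intervalIntegral.integral_interval_sub_left (hint 0 (a+1/a)) (hint 0 a)]
  have hp0 : (0:ℝ) ≤ p := by linarith
  have hfpos : ∀ τ ∈ Set.Icc a (a+1/a), 0 ≤ f τ := by
    intro τ hτ
    have hτ0 : 0 < τ := lt_of_lt_of_le ha hτ.1
    have h1 := (hgrowth τ).1
    nlinarith
  have hfub : ∀ τ ∈ Set.Icc a (a+1/a), f τ ≤ C * (2*a)^p := by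
    intro τ hτ
    have hτ0 : 0 < τ := lt_of_lt_of_le ha hτ.1
    have h2 := (hgrowth τ).2
    have habs : |τ| = τ := abs_of_pos hτ0
    have hsplit : τ ^ (p+1) = τ ^ p * τ := by
      rw [Real.rpow_add hτ0, Real.rpow_one]
    rw [habs, hsplit] at h2
    have hfle : f τ ≤ C * τ ^ p := by
      have h2' : f τ * τ ≤ (C * τ ^ p) * τ := by nlinarith [h2]
      exact le_of_mul_le_mul_right h2' hτ0
    have hmono : τ ^ p ≤ (2*a) ^ p :=
      Real.rpow_le_rpow (le_of_lt hτ0) (le_trans hτ.2 hba) hp0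
    calc f τ ≤ C * τ ^ p := hfle
      _ ≤ C * (2*a) ^ p := by
          exact mul_le_mul_of_nonneg_left hmono (le_of_lt hC)
  have hI0 : 0 ≤ ∫ τ in a..(a+1/a), f τ :=
    intervalIntegral.integral_nonneg hb hfpos
  have hIub : (∫ τ in a..(a+1/a), f τ) ≤ (1/a) * (C * (2*a)^p) := by
    have h := intervalIntegral.integral_mono_on hb (hint a (a+1/a))
      (intervalIntegrable_const) hfub
    rw [intervalIntegral.integral_const, smul_eq_mul] at h
    have : a + 1/a - a = 1/a := by ring
    rwa [this] at h
  have hfkval : fk s = a * ∫ τ in a..(a+1/a), f τ := by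
    rw [hfk s hs, hGdiff]
  have hfk0 : 0 ≤ fk s := by
    rw [hfkval]; exact mul_nonneg (le_of_lt ha) hI0
  constructor
  · exact mul_nonneg (le_of_lt hs0) hfk0
  · have hfkub : fk s ≤ C * 2^p * a^p := by
      rw [hfkval]
      have h1 : a * (∫ τ in a..(a+1/a), f τ) ≤ a * ((1/a) * (C * (2*a)^p)) :=
        mul_le_mul_of_nonneg_left hIub (le_of_lt ha)
      have h2 : a * ((1/a) * (C * (2*a)^p)) = C * (2*a)^p := by
        field_simp
      have h3 : (2*a)^p = 2^p * a^p :=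
        Real.mul_rpow (by norm_num) (le_of_lt ha)
      rw [h2, h3] at h1
      linarith [h1]
    have hap : a^p ≤ s^p := Real.rpow_le_rpow (le_of_lt ha) hs hp0
    have habs : |s| = s := abs_of_pos hs0
    have hsplit : s ^ (p+1) = s ^ p * s := by
      rw [Real.rpow_add hs0, Real.rpow_one]
    rw [habs, hsplit]
    have h2p : (0:ℝ) < 2^p := Real.rpow_pos_of_pos (by norm_num) p
    calc s * fk s ≤ s * (C * 2^p * a^p) :=
          mul_le_mul_of_nonneg_left hfkub (le_of_lt hs0)
      _ ≤ s * (C * 2^p * s^p) := by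
          apply mul_le_mul_of_nonneg_left _ (le_of_lt hs0)
          exact mul_le_mul_of_nonneg_left hap (by positivity)
      _ = C * 2^p * (s^p * s) := by ring
end

section
/- Let f : ℝ → ℝ be continuous with s·f(s) ≥ 0 for all s, and let f_k be the Strauss approximations (defined via G(s) = ∫₀ˢ f by the standard six-piece formula). Then each f_k is Lipschitz continuous: for every k there exists c_k > 0 such that |f_k(ξ) − f_k(η)| ≤ c_k|ξ − η| for all ξ, η ∈ ℝ. -/
open MeasureTheory

noncomputable def strauss (f : ℝ → ℝ) (k : ℕ) (s : ℝ) : ℝ :=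
  let G : ℝ → ℝ := fun t => ∫ τ in (0:ℝ)..t, f τ
  if s ≤ -(k:ℝ) then -(k:ℝ) * (G (-(k:ℝ) - 1 / (k:ℝ)) - G (-(k:ℝ)))
  else if s ≤ -(1 / (k:ℝ)) then -(k:ℝ) * (G (s - 1 / (k:ℝ)) - G s)
  else if s ≤ 0 then (k:ℝ) ^ 2 * s * (G (-(2 / (k:ℝ))) - G (-(1 / (k:ℝ))))
  else if s ≤ 1 / (k:ℝ) then (k:ℝ) ^ 2 * s * (G (2 / (k:ℝ)) - G (1 / (k:ℝ)))
  else if s ≤ (k:ℝ) then (k:ℝ) * (G (s + 1 / (k:ℝ)) - G s)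
  else (k:ℝ) * (G ((k:ℝ) + 1 / (k:ℝ)) - G (k:ℝ))

noncomputable def Gf (f : ℝ → ℝ) (t : ℝ) : ℝ := ∫ τ in (0:ℝ)..t, f τ

lemma strauss_def (f : ℝ → ℝ) (k : ℕ) (s : ℝ) :
    strauss f k s =
      if s ≤ -(k:ℝ) then -(k:ℝ) * (Gf f (-(k:ℝ) - 1 / (k:ℝ)) - Gf f (-(k:ℝ)))
      else if s ≤ -(1 / (k:ℝ)) then -(k:ℝ) * (Gf f (s - 1 / (k:ℝ)) - Gf f s)
      else if s ≤ 0 then (k:ℝ) ^ 2 * s * (Gf f (-(2 / (k:ℝ))) - Gf f (-(1 / (k:ℝ))))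
      else if s ≤ 1 / (k:ℝ) then (k:ℝ) ^ 2 * s * (Gf f (2 / (k:ℝ)) - Gf f (1 / (k:ℝ)))
      else if s ≤ (k:ℝ) then (k:ℝ) * (Gf f (s + 1 / (k:ℝ)) - Gf f s)
      else (k:ℝ) * (Gf f ((k:ℝ) + 1 / (k:ℝ)) - Gf f (k:ℝ)) := rfl

lemma lip_glue {g : ℝ → ℝ} {c b : ℝ} {P Q : ℝ → Prop}
    (hP : ∀ x, P x → x ≤ b) (hQ : ∀ x, Q x → b ≤ x) (hPb : P b) (hQb : Q b)
    (h1 : ∀ x y, P x → P y → |g x - g y| ≤ c * |x - y|)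
    (h2 : ∀ x y, Q x → Q y → |g x - g y| ≤ c * |x - y|) :
    ∀ x y, (P x ∨ Q x) → (P y ∨ Q y) → |g x - g y| ≤ c * |x - y| := by
  have key : ∀ x y, P x → Q y → |g x - g y| ≤ c * |x - y| := by
    intro x y hx hy
    have h1' := h1 x b hx hPb
    have h2' := h2 b y hQb hy
    have hxb := hP x hx
    have hby := hQ y hy
    calc |g x - g y| ≤ |g x - g b| + |g b - g y| := abs_sub_le _ _ _
      _ ≤ c * |x - b| + c * |b - y| := add_le_add h1' h2'
      _ = c * |x - y| := by
          rw [abs_of_nonpos (by linarith : x - b ≤ 0),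
              abs_of_nonpos (by linarith : b - y ≤ 0),
              abs_of_nonpos (by linarith : x - y ≤ 0)]
          ring
  rintro x y (hx | hx) (hy | hy)
  · exact h1 x y hx hy
  · exact key x y hx hy
  · rw [abs_sub_comm]
    have := key y x hy hx
    rwa [abs_sub_comm y x] at this
  · exact h2 x y hx hy

theorem stmt6 (f : ℝ → ℝ) (hf : Continuous f) (hsf : ∀ s : ℝ, s * f s ≥ 0) :
    ∀ k : ℕ, 1 ≤ k → ∃ c : ℝ, 0 < c ∧
      ∀ ξ η : ℝ, |strauss f k ξ - strauss f k η| ≤ c * |ξ - η| := by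
  intro k hk
  have hk1 : (1:ℝ) ≤ (k:ℝ) := by exact_mod_cast hk
  have hk0 : (0:ℝ) < (k:ℝ) := by linarith
  have hik : 0 < 1 / (k:ℝ) := by positivity
  have hik1 : 1 / (k:ℝ) ≤ 1 := by rw [div_le_one hk0]; exact hk1
  have hkk : 1 / (k:ℝ) ≤ (k:ℝ) := le_trans hik1 hk1
  have h2k0 : 0 < 2 / (k:ℝ) := by positivity
  have h2k : 2 / (k:ℝ) ≤ 2 := by rw [div_le_iff₀ hk0]; linarith
  set K : ℝ := (k:ℝ) + 1 with hKdef
  -- bound on f on [-K, K]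
  obtain ⟨C, hC0, hC⟩ : ∃ C, 0 ≤ C ∧ ∀ t ∈ Set.Icc (-K) K, |f t| ≤ C := by
    obtain ⟨C0, hC0'⟩ := (isCompact_Icc (a := -K) (b := K)).exists_bound_of_continuousOn
      hf.continuousOn
    refine ⟨max C0 0, le_max_right _ _, fun t ht => ?_⟩
    exact le_trans (hC0' t ht) (le_max_left _ _)
  -- Lipschitz bound for Gf on [-K, K]
  have hG : ∀ x ∈ Set.Icc (-K) K, ∀ y ∈ Set.Icc (-K) K, |Gf f x - Gf f y| ≤ C * |x - y| := by
    intro x hx y hy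
    have hint : Gf f x - Gf f y = ∫ τ in y..x, f τ :=
      intervalIntegral.integral_interval_sub_left (hf.intervalIntegrable _ _)
        (hf.intervalIntegrable _ _)
    rw [hint]
    have hb : ∀ t ∈ Set.uIoc y x, ‖f t‖ ≤ C := by
      intro t ht
      exact hC t (Set.uIcc_subset_Icc hy hx (Set.uIoc_subset_uIcc ht))
    have := intervalIntegral.norm_integral_le_of_norm_le_const hb
    simpa [Real.norm_eq_abs] using this
  -- membership helpers
  have memK : ∀ t : ℝ, -K ≤ t → t ≤ K → t ∈ Set.Icc (-K) K := fun t h1 h2 => ⟨h1, h2⟩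
  -- branch formulas
  have eq1 : ∀ x : ℝ, x ≤ -(k:ℝ) →
      strauss f k x = -(k:ℝ) * (Gf f (-(k:ℝ) - 1 / (k:ℝ)) - Gf f (-(k:ℝ))) := by
    intro x hx
    rw [strauss_def, if_pos hx]
  have eq2 : ∀ x : ℝ, -(k:ℝ) ≤ x → x ≤ -(1 / (k:ℝ)) →
      strauss f k x = -(k:ℝ) * (Gf f (x - 1 / (k:ℝ)) - Gf f x) := by
    intro x h1 h2
    rw [strauss_def]
    rcases le_or_gt x (-(k:ℝ)) with h | h
    · have hx : x = -(k:ℝ) := le_antisymm h h1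
      rw [if_pos h, hx]
    · rw [if_neg (not_le.2 h), if_pos h2]
  have eq3 : ∀ x : ℝ, -(1 / (k:ℝ)) ≤ x → x ≤ 0 →
      strauss f k x = (k:ℝ) ^ 2 * x * (Gf f (-(2 / (k:ℝ))) - Gf f (-(1 / (k:ℝ)))) := by
    intro x h1 h2
    rcases le_or_gt x (-(1 / (k:ℝ))) with h | h
    · have hx : x = -(1 / (k:ℝ)) := le_antisymm h h1
      rw [hx, eq2 _ (by linarith) le_rfl,
        show -(1 / (k:ℝ)) - 1 / (k:ℝ) = -(2 / (k:ℝ)) from by ring,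
        show (k:ℝ) ^ 2 * -(1 / (k:ℝ)) = -(k:ℝ) from by field_simp]
    · rw [strauss_def, if_neg (not_le.2 (by linarith)), if_neg (not_le.2 h), if_pos h2]
  have eq4 : ∀ x : ℝ, 0 ≤ x → x ≤ 1 / (k:ℝ) →
      strauss f k x = (k:ℝ) ^ 2 * x * (Gf f (2 / (k:ℝ)) - Gf f (1 / (k:ℝ))) := by
    intro x h1 h2
    rw [strauss_def]
    rcases le_or_gt x 0 with h | h
    · have hx : x = 0 := le_antisymm h h1
      rw [hx, if_neg (not_le.2 (by linarith)), if_neg (not_le.2 (by linarith)), if_pos le_rfl]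
      ring
    · rw [if_neg (not_le.2 (by linarith)), if_neg (not_le.2 (by linarith)),
        if_neg (not_le.2 h), if_pos h2]
  have eq5 : ∀ x : ℝ, 1 / (k:ℝ) ≤ x → x ≤ (k:ℝ) →
      strauss f k x = (k:ℝ) * (Gf f (x + 1 / (k:ℝ)) - Gf f x) := by
    intro x h1 h2
    rcases le_or_gt x (1 / (k:ℝ)) with h | h
    · have hx : x = 1 / (k:ℝ) := le_antisymm h h1
      rw [hx, eq4 _ (by linarith) le_rfl,
        show (1:ℝ) / (k:ℝ) + 1 / (k:ℝ) = 2 / (k:ℝ) from by ring,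
        show (k:ℝ) ^ 2 * (1 / (k:ℝ)) = (k:ℝ) from by field_simp]
    · rw [strauss_def, if_neg (not_le.2 (by linarith)), if_neg (not_le.2 (by linarith)),
        if_neg (not_le.2 (by linarith)), if_neg (not_le.2 h), if_pos h2]
  have eq6 : ∀ x : ℝ, (k:ℝ) ≤ x →
      strauss f k x = (k:ℝ) * (Gf f ((k:ℝ) + 1 / (k:ℝ)) - Gf f (k:ℝ)) := by
    intro x h1
    rcases le_or_gt x (k:ℝ) with h | h
    · have hx : x = (k:ℝ) := le_antisymm h h1
      rw [hx, eq5 _ hkk le_rfl]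
    · rw [strauss_def, if_neg (not_le.2 (by linarith)), if_neg (not_le.2 (by linarith)),
        if_neg (not_le.2 (by linarith)), if_neg (not_le.2 (by linarith)), if_neg (not_le.2 h)]
  -- the constant
  refine ⟨2 * (k:ℝ) * C + 1, by positivity, ?_⟩
  set c : ℝ := 2 * (k:ℝ) * C + 1 with hcdef
  have hc0 : 0 < c := by positivity
  -- shifted difference helper
  have hpair : ∀ x y u v : ℝ, x ∈ Set.Icc (-K) K → y ∈ Set.Icc (-K) K →
      u ∈ Set.Icc (-K) K → v ∈ Set.Icc (-K) K → u - v = x - y →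
      |(Gf f u - Gf f x) - (Gf f v - Gf f y)| ≤ 2 * C * |x - y| := by
    intro x y u v hx hy hu hv huv
    have h1 := hG u hu v hv
    have h2 := hG x hx y hy
    rw [huv] at h1
    calc |(Gf f u - Gf f x) - (Gf f v - Gf f y)|
        = |(Gf f u - Gf f v) - (Gf f x - Gf f y)| := by ring_nf
      _ ≤ |Gf f u - Gf f v| + |Gf f x - Gf f y| := abs_sub _ _
      _ ≤ C * |x - y| + C * |x - y| := add_le_add h1 h2
      _ = 2 * C * |x - y| := by ring
  -- piece Lipschitz bounds
  have L1 : ∀ x y : ℝ, x ≤ -(k:ℝ) → y ≤ -(k:ℝ) →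
      |strauss f k x - strauss f k y| ≤ c * |x - y| := by
    intro x y hx hy
    rw [eq1 x hx, eq1 y hy, sub_self, abs_zero]
    positivity
  have L2 : ∀ x y : ℝ, (-(k:ℝ) ≤ x ∧ x ≤ -(1 / (k:ℝ))) → (-(k:ℝ) ≤ y ∧ y ≤ -(1 / (k:ℝ))) →
      |strauss f k x - strauss f k y| ≤ c * |x - y| := by
    rintro x y ⟨hx1, hx2⟩ ⟨hy1, hy2⟩
    rw [eq2 x hx1 hx2, eq2 y hy1 hy2]
    have key := hpair x y (x - 1 / (k:ℝ)) (y - 1 / (k:ℝ))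
      (memK x (by linarith) (by linarith)) (memK y (by linarith) (by linarith))
      (memK _ (by linarith) (by linarith)) (memK _ (by linarith) (by linarith)) (by ring)
    rw [show -(k:ℝ) * (Gf f (x - 1 / (k:ℝ)) - Gf f x) - -(k:ℝ) * (Gf f (y - 1 / (k:ℝ)) - Gf f y)
        = -(k:ℝ) * ((Gf f (x - 1 / (k:ℝ)) - Gf f x) - (Gf f (y - 1 / (k:ℝ)) - Gf f y)) from by ring,
      abs_mul, abs_neg, abs_of_nonneg (le_of_lt hk0)]
    calc (k:ℝ) * |(Gf f (x - 1 / (k:ℝ)) - Gf f x) - (Gf f (y - 1 / (k:ℝ)) - Gf f y)|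
        ≤ (k:ℝ) * (2 * C * |x - y|) := mul_le_mul_of_nonneg_left key (le_of_lt hk0)
      _ ≤ c * |x - y| := by nlinarith [abs_nonneg (x - y)]
  have L3 : ∀ x y : ℝ, (-(1 / (k:ℝ)) ≤ x ∧ x ≤ 0) → (-(1 / (k:ℝ)) ≤ y ∧ y ≤ 0) →
      |strauss f k x - strauss f k y| ≤ c * |x - y| := by
    rintro x y ⟨hx1, hx2⟩ ⟨hy1, hy2⟩
    rw [eq3 x hx1 hx2, eq3 y hy1 hy2]
    have hD : |Gf f (-(2 / (k:ℝ))) - Gf f (-(1 / (k:ℝ)))| ≤ C * (1 / (k:ℝ)) := by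
      have := hG (-(2 / (k:ℝ))) (memK _ (by linarith) (by linarith))
        (-(1 / (k:ℝ))) (memK _ (by linarith) (by linarith))
      rwa [show -(2 / (k:ℝ)) - -(1 / (k:ℝ)) = -(1 / (k:ℝ)) from by ring, abs_neg,
        abs_of_nonneg (le_of_lt hik)] at this
    rw [show (k:ℝ) ^ 2 * x * (Gf f (-(2 / (k:ℝ))) - Gf f (-(1 / (k:ℝ))))
        - (k:ℝ) ^ 2 * y * (Gf f (-(2 / (k:ℝ))) - Gf f (-(1 / (k:ℝ))))
        = ((k:ℝ) ^ 2 * (Gf f (-(2 / (k:ℝ))) - Gf f (-(1 / (k:ℝ))))) * (x - y) from by ring,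
      abs_mul, abs_mul, abs_of_nonneg (by positivity : (0:ℝ) ≤ (k:ℝ) ^ 2)]
    have hstep : (k:ℝ) ^ 2 * (C * (1 / (k:ℝ))) = (k:ℝ) * C := by field_simp
    calc (k:ℝ) ^ 2 * |Gf f (-(2 / (k:ℝ))) - Gf f (-(1 / (k:ℝ)))| * |x - y|
        ≤ (k:ℝ) ^ 2 * (C * (1 / (k:ℝ))) * |x - y| := by
          apply mul_le_mul_of_nonneg_right _ (abs_nonneg _)
          exact mul_le_mul_of_nonneg_left hD (by positivity)
      _ = (k:ℝ) * C * |x - y| := by rw [hstep]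
      _ ≤ c * |x - y| := by nlinarith [abs_nonneg (x - y)]
  have L4 : ∀ x y : ℝ, (0 ≤ x ∧ x ≤ 1 / (k:ℝ)) → (0 ≤ y ∧ y ≤ 1 / (k:ℝ)) →
      |strauss f k x - strauss f k y| ≤ c * |x - y| := by
    rintro x y ⟨hx1, hx2⟩ ⟨hy1, hy2⟩
    rw [eq4 x hx1 hx2, eq4 y hy1 hy2]
    have hD : |Gf f (2 / (k:ℝ)) - Gf f (1 / (k:ℝ))| ≤ C * (1 / (k:ℝ)) := by
      have := hG (2 / (k:ℝ)) (memK _ (by linarith) (by linarith))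
        (1 / (k:ℝ)) (memK _ (by linarith) (by linarith))
      rwa [show 2 / (k:ℝ) - 1 / (k:ℝ) = 1 / (k:ℝ) from by ring,
        abs_of_nonneg (le_of_lt hik)] at this
    rw [show (k:ℝ) ^ 2 * x * (Gf f (2 / (k:ℝ)) - Gf f (1 / (k:ℝ)))
        - (k:ℝ) ^ 2 * y * (Gf f (2 / (k:ℝ)) - Gf f (1 / (k:ℝ)))
        = ((k:ℝ) ^ 2 * (Gf f (2 / (k:ℝ)) - Gf f (1 / (k:ℝ)))) * (x - y) from by ring,
      abs_mul, abs_mul, abs_of_nonneg (by positivity : (0:ℝ) ≤ (k:ℝ) ^ 2)]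
    have hstep : (k:ℝ) ^ 2 * (C * (1 / (k:ℝ))) = (k:ℝ) * C := by field_simp
    calc (k:ℝ) ^ 2 * |Gf f (2 / (k:ℝ)) - Gf f (1 / (k:ℝ))| * |x - y|
        ≤ (k:ℝ) ^ 2 * (C * (1 / (k:ℝ))) * |x - y| := by
          apply mul_le_mul_of_nonneg_right _ (abs_nonneg _)
          exact mul_le_mul_of_nonneg_left hD (by positivity)
      _ = (k:ℝ) * C * |x - y| := by rw [hstep]
      _ ≤ c * |x - y| := by nlinarith [abs_nonneg (x - y)]
  have L5 : ∀ x y : ℝ, (1 / (k:ℝ) ≤ x ∧ x ≤ (k:ℝ)) → (1 / (k:ℝ) ≤ y ∧ y ≤ (k:ℝ)) →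
      |strauss f k x - strauss f k y| ≤ c * |x - y| := by
    rintro x y ⟨hx1, hx2⟩ ⟨hy1, hy2⟩
    rw [eq5 x hx1 hx2, eq5 y hy1 hy2]
    have key := hpair x y (x + 1 / (k:ℝ)) (y + 1 / (k:ℝ))
      (memK x (by linarith) (by linarith)) (memK y (by linarith) (by linarith))
      (memK _ (by linarith) (by linarith)) (memK _ (by linarith) (by linarith)) (by ring)
    rw [show (k:ℝ) * (Gf f (x + 1 / (k:ℝ)) - Gf f x) - (k:ℝ) * (Gf f (y + 1 / (k:ℝ)) - Gf f y)
        = (k:ℝ) * ((Gf f (x + 1 / (k:ℝ)) - Gf f x) - (Gf f (y + 1 / (k:ℝ)) - Gf f y)) from by ring,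
      abs_mul, abs_of_nonneg (le_of_lt hk0)]
    calc (k:ℝ) * |(Gf f (x + 1 / (k:ℝ)) - Gf f x) - (Gf f (y + 1 / (k:ℝ)) - Gf f y)|
        ≤ (k:ℝ) * (2 * C * |x - y|) := mul_le_mul_of_nonneg_left key (le_of_lt hk0)
      _ ≤ c * |x - y| := by nlinarith [abs_nonneg (x - y)]
  have L6 : ∀ x y : ℝ, (k:ℝ) ≤ x → (k:ℝ) ≤ y →
      |strauss f k x - strauss f k y| ≤ c * |x - y| := by
    intro x y hx hy
    rw [eq6 x hx, eq6 y hy, sub_self, abs_zero]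
    positivity
  -- gluing
  have g12 := lip_glue (P := fun x => x ≤ -(k:ℝ))
    (Q := fun x => -(k:ℝ) ≤ x ∧ x ≤ -(1 / (k:ℝ))) (b := -(k:ℝ))
    (fun x hx => hx) (fun x hx => hx.1) le_rfl ⟨le_rfl, by linarith⟩ L1 L2
  have M2 : ∀ x y : ℝ, x ≤ -(1 / (k:ℝ)) → y ≤ -(1 / (k:ℝ)) →
      |strauss f k x - strauss f k y| ≤ c * |x - y| := by
    intro x y hx hy
    refine g12 x y ?_ ?_
    · rcases le_total x (-(k:ℝ)) with h | h
      · exact Or.inl h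
      · exact Or.inr ⟨h, hx⟩
    · rcases le_total y (-(k:ℝ)) with h | h
      · exact Or.inl h
      · exact Or.inr ⟨h, hy⟩
  have g123 := lip_glue (P := fun x => x ≤ -(1 / (k:ℝ)))
    (Q := fun x => -(1 / (k:ℝ)) ≤ x ∧ x ≤ 0) (b := -(1 / (k:ℝ)))
    (fun x hx => hx) (fun x hx => hx.1) le_rfl ⟨le_rfl, by linarith⟩ M2 L3
  have M3 : ∀ x y : ℝ, x ≤ 0 → y ≤ 0 →
      |strauss f k x - strauss f k y| ≤ c * |x - y| := by
    intro x y hx hy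
    refine g123 x y ?_ ?_
    · rcases le_total x (-(1 / (k:ℝ))) with h | h
      · exact Or.inl h
      · exact Or.inr ⟨h, hx⟩
    · rcases le_total y (-(1 / (k:ℝ))) with h | h
      · exact Or.inl h
      · exact Or.inr ⟨h, hy⟩
  have g1234 := lip_glue (P := fun x => x ≤ 0)
    (Q := fun x => 0 ≤ x ∧ x ≤ 1 / (k:ℝ)) (b := 0)
    (fun x hx => hx) (fun x hx => hx.1) le_rfl ⟨le_rfl, by linarith⟩ M3 L4
  have M4 : ∀ x y : ℝ, x ≤ 1 / (k:ℝ) → y ≤ 1 / (k:ℝ) →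
      |strauss f k x - strauss f k y| ≤ c * |x - y| := by
    intro x y hx hy
    refine g1234 x y ?_ ?_
    · rcases le_total x 0 with h | h
      · exact Or.inl h
      · exact Or.inr ⟨h, hx⟩
    · rcases le_total y 0 with h | h
      · exact Or.inl h
      · exact Or.inr ⟨h, hy⟩
  have g12345 := lip_glue (P := fun x => x ≤ 1 / (k:ℝ))
    (Q := fun x => 1 / (k:ℝ) ≤ x ∧ x ≤ (k:ℝ)) (b := 1 / (k:ℝ))
    (fun x hx => hx) (fun x hx => hx.1) le_rfl ⟨le_rfl, hkk⟩ M4 L5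
  have M5 : ∀ x y : ℝ, x ≤ (k:ℝ) → y ≤ (k:ℝ) →
      |strauss f k x - strauss f k y| ≤ c * |x - y| := by
    intro x y hx hy
    refine g12345 x y ?_ ?_
    · rcases le_total x (1 / (k:ℝ)) with h | h
      · exact Or.inl h
      · exact Or.inr ⟨h, hx⟩
    · rcases le_total y (1 / (k:ℝ)) with h | h
      · exact Or.inl h
      · exact Or.inr ⟨h, hy⟩
  have gall := lip_glue (P := fun x => x ≤ (k:ℝ)) (Q := fun x => (k:ℝ) ≤ x) (b := (k:ℝ))
    (fun x hx => hx) (fun x hx => hx) le_rfl le_rfl M5 L6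
  intro ξ η
  exact gall ξ η (le_total ξ (k:ℝ)) (le_total η (k:ℝ))
end

section
/- Let f : ℝ → ℝ be continuous with s·f(s) ≥ 0 for all s, and let f_k be the Strauss approximations. Then s·f_k(s) ≥ 0 for all s ∈ ℝ and all k ≥ 1. -/
open MeasureTheory

theorem stmt7 (f : ℝ → ℝ) (hf : Continuous f) (hsf : ∀ s : ℝ, s * f s ≥ 0) :
    ∀ k : ℕ, 1 ≤ k → ∀ s : ℝ, s * strauss f k s ≥ 0 := by
  intro k hk s
  have hk0 : (0:ℝ) < (k:ℝ) := by exact_mod_cast Nat.pos_of_ne_zero (by omega)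
  have hik : (0:ℝ) < 1 / (k:ℝ) := by positivity
  have h12 : 1 / (k:ℝ) ≤ 2 / (k:ℝ) := by
    rw [div_le_div_iff₀ hk0 hk0]; linarith
  have hfpos : ∀ τ : ℝ, 0 < τ → 0 ≤ f τ := by
    intro τ hτ; have := hsf τ; nlinarith
  have hfneg : ∀ τ : ℝ, τ < 0 → f τ ≤ 0 := by
    intro τ hτ; have := hsf τ; nlinarith
  have hG : ∀ a b : ℝ, (∫ τ in (0:ℝ)..b, f τ) - (∫ τ in (0:ℝ)..a, f τ)
      = ∫ τ in a..b, f τ := by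
    intro a b
    rw [intervalIntegral.integral_interval_sub_left
      (hf.intervalIntegrable 0 b) (hf.intervalIntegrable 0 a)]
  have hintpos : ∀ a b : ℝ, 0 < a → a ≤ b → 0 ≤ ∫ τ in a..b, f τ := by
    intro a b ha hab
    exact intervalIntegral.integral_nonneg hab (fun u hu => hfpos u (lt_of_lt_of_le ha hu.1))
  have hintneg : ∀ a b : ℝ, a ≤ b → b < 0 → (∫ τ in a..b, f τ) ≤ 0 := by
    intro a b hab hb
    have h0 : 0 ≤ ∫ τ in a..b, -f τ :=
      intervalIntegral.integral_nonneg hab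
        (fun u hu => neg_nonneg.mpr (hfneg u (lt_of_le_of_lt hu.2 hb)))
    rw [intervalIntegral.integral_neg] at h0
    linarith
  unfold strauss
  simp only []
  split_ifs with h1 h2 h3 h4 h5
  · -- s ≤ -k
    have hd : 0 ≤ (∫ τ in (0:ℝ)..(-(k:ℝ) - 1/(k:ℝ)), f τ) - ∫ τ in (0:ℝ)..(-(k:ℝ)), f τ := by
      rw [hG, intervalIntegral.integral_symm]
      have := hintneg (-(k:ℝ) - 1/(k:ℝ)) (-(k:ℝ)) (by linarith) (by linarith)
      linarith
    have hs : s ≤ 0 := by linarith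
    nlinarith [mul_nonneg (neg_nonneg.mpr hs) (mul_nonneg hk0.le hd)]
  · -- -k < s ≤ -1/k
    have hd : 0 ≤ (∫ τ in (0:ℝ)..(s - 1/(k:ℝ)), f τ) - ∫ τ in (0:ℝ)..s, f τ := by
      rw [hG, intervalIntegral.integral_symm]
      have := hintneg (s - 1/(k:ℝ)) s (by linarith) (by linarith)
      linarith
    have hs : s ≤ 0 := by linarith
    nlinarith [mul_nonneg (neg_nonneg.mpr hs) (mul_nonneg hk0.le hd)]
  · -- -1/k < s ≤ 0
    have hd : 0 ≤ (∫ τ in (0:ℝ)..(-(2/(k:ℝ))), f τ) - ∫ τ in (0:ℝ)..(-(1/(k:ℝ))), f τ := by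
      rw [hG, intervalIntegral.integral_symm]
      have := hintneg (-(2/(k:ℝ))) (-(1/(k:ℝ))) (by linarith) (by linarith)
      linarith
    nlinarith [mul_nonneg (mul_nonneg (sq_nonneg ((k:ℝ) * s)) (sq_nonneg (1:ℝ))) hd,
      mul_nonneg (mul_self_nonneg s) (mul_nonneg (mul_nonneg hk0.le hk0.le) hd)]
  · -- 0 < s ≤ 1/k
    push_neg at h3
    have hd : 0 ≤ (∫ τ in (0:ℝ)..(2/(k:ℝ)), f τ) - ∫ τ in (0:ℝ)..(1/(k:ℝ)), f τ := by
      rw [hG]; exact hintpos _ _ hik h12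
    nlinarith [mul_nonneg (mul_self_nonneg s) (mul_nonneg (mul_nonneg hk0.le hk0.le) hd)]
  · -- 1/k < s ≤ k
    push_neg at h4
    have hs : 0 < s := lt_trans hik h4
    have hd : 0 ≤ (∫ τ in (0:ℝ)..(s + 1/(k:ℝ)), f τ) - ∫ τ in (0:ℝ)..s, f τ := by
      rw [hG]; exact hintpos _ _ hs (by linarith)
    nlinarith [mul_nonneg hs.le (mul_nonneg hk0.le hd)]
  · -- s > k
    push_neg at h5
    have hd : 0 ≤ (∫ τ in (0:ℝ)..((k:ℝ) + 1/(k:ℝ)), f τ) - ∫ τ in (0:ℝ)..(k:ℝ), f τ := by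
      rw [hG]; exact hintpos _ _ hk0 (by linarith)
    nlinarith [mul_nonneg (le_of_lt (lt_trans hk0 h5)) (mul_nonneg hk0.le hd)]
end

section
/- Let f : ℝ → ℝ be continuous with s·f(s) ≥ 0 for all s, and let f_k be the Strauss approximations. Then f_k converges to f uniformly on every bounded subset of ℝ. -/
open MeasureTheory

lemma Gdiff (f : ℝ → ℝ) (hf : Continuous f) (a b : ℝ) :
    (∫ τ in (0:ℝ)..b, f τ) - ∫ τ in (0:ℝ)..a, f τ = ∫ τ in a..b, f τ :=
  intervalIntegral.integral_interval_sub_left (hf.intervalIntegrable _ _)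
    (hf.intervalIntegrable _ _)

lemma avg_close (f : ℝ → ℝ) (hf : Continuous f) (a b s C : ℝ)
    (h : ∀ τ ∈ Set.uIoc a b, |f τ - f s| ≤ C) :
    |(∫ τ in a..b, f τ) - (b - a) * f s| ≤ C * |b - a| := by
  have heq : (∫ τ in a..b, f τ) - (b - a) * f s = ∫ τ in a..b, (f τ - f s) := by
    rw [intervalIntegral.integral_sub (hf.intervalIntegrable _ _) intervalIntegrable_const,
      intervalIntegral.integral_const, smul_eq_mul]
  rw [heq]
  have hb : ∀ x ∈ Set.uIoc a b, ‖f x - f s‖ ≤ C := fun x hx => by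
    rw [Real.norm_eq_abs]; exact h x hx
  simpa [Real.norm_eq_abs] using intervalIntegral.norm_integral_le_of_norm_le_const hb

lemma fzero (f : ℝ → ℝ) (hf : Continuous f) (hsf : ∀ s : ℝ, s * f s ≥ 0) : f 0 = 0 := by
  have h1 : ∀ s < (0:ℝ), f s ≤ 0 := by
    intro s hs
    by_contra h
    push_neg at h
    nlinarith [hsf s]
  have h2 : ∀ s > (0:ℝ), 0 ≤ f s := by
    intro s hs
    by_contra h
    push_neg at h
    nlinarith [hsf s]
  have hle : f 0 ≤ 0 := by
    refine le_of_tendsto (hf.continuousAt.mono_left nhdsWithin_le_nhds :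
      Filter.Tendsto f (nhdsWithin 0 (Set.Iio 0)) (nhds (f 0))) ?_
    filter_upwards [self_mem_nhdsWithin] with s hs using h1 s hs
  have hge : 0 ≤ f 0 := by
    refine ge_of_tendsto (hf.continuousAt.mono_left nhdsWithin_le_nhds :
      Filter.Tendsto f (nhdsWithin 0 (Set.Ioi 0)) (nhds (f 0))) ?_
    filter_upwards [self_mem_nhdsWithin] with s hs using h2 s hs
  linarith

set_option maxHeartbeats 1000000 in
theorem stmt8 (f : ℝ → ℝ) (hf : Continuous f) (hsf : ∀ s : ℝ, s * f s ≥ 0) :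
    ∀ M : ℝ, 0 < M → ∀ ε : ℝ, 0 < ε → ∃ K : ℕ, 1 ≤ K ∧
      ∀ k : ℕ, K ≤ k → ∀ s : ℝ, |s| ≤ M → |strauss f k s - f s| < ε := by
  have hf0 : f 0 = 0 := fzero f hf hsf
  intro M hM ε hε
  have hε2 : 0 < ε / 2 := by linarith
  obtain ⟨δ, hδ, hδc⟩ := Metric.uniformContinuousOn_iff.mp
    ((isCompact_Icc (a := -(M+2)) (b := M+2)).uniformContinuousOn_of_continuous
      hf.continuousOn) (ε/2) hε2
  refine ⟨⌈M⌉₊ + ⌈2/δ⌉₊ + 1, by omega, ?_⟩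
  intro k hk s hs
  have hkK : ((⌈M⌉₊ + ⌈2/δ⌉₊ + 1 : ℕ) : ℝ) ≤ (k:ℝ) := Nat.cast_le.mpr hk
  have hcast : ((⌈M⌉₊ + ⌈2/δ⌉₊ + 1 : ℕ) : ℝ) = (⌈M⌉₊:ℝ) + (⌈2/δ⌉₊:ℝ) + 1 := by push_cast; ring
  have hM1 : M + 1 ≤ (k:ℝ) := by
    have := Nat.le_ceil M
    have h0 : (0:ℝ) ≤ (⌈2/δ⌉₊:ℝ) := Nat.cast_nonneg _
    rw [hcast] at hkK
    linarith
  have hδk : 2/δ < (k:ℝ) := by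
    have := Nat.le_ceil (2/δ)
    have h0 : (0:ℝ) ≤ (⌈M⌉₊:ℝ) := Nat.cast_nonneg _
    rw [hcast] at hkK
    linarith
  have hk1 : (1:ℝ) ≤ k := by linarith
  have hkpos : (0:ℝ) < k := by linarith
  have h2k : 2/(k:ℝ) < δ := by
    rw [div_lt_iff₀ hkpos]
    have := (div_lt_iff₀ hδ).mp hδk
    nlinarith
  have h1kpos : (0:ℝ) < 1/(k:ℝ) := by positivity
  have h1k : 1/(k:ℝ) < δ := by
    have : (1:ℝ)/k ≤ 2/k := by gcongr; norm_num
    linarith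
  have h1kle1 : 1/(k:ℝ) ≤ 1 := by rw [div_le_one hkpos]; exact hk1
  have h2kle2 : 2/(k:ℝ) ≤ 2 := by rw [div_le_iff₀ hkpos]; nlinarith
  have h12 : 1/(k:ℝ) ≤ 2/(k:ℝ) := by gcongr; norm_num
  have habs := abs_le.mp hs
  have hsC : s ∈ Set.Icc (-(M+2)) (M+2) := ⟨by linarith [habs.1], by linarith [habs.2]⟩
  have h0C : (0:ℝ) ∈ Set.Icc (-(M+2)) (M+2) := ⟨by linarith, by linarith⟩
  simp only [strauss]
  split_ifs with h1 h2 h3 h4 h5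
  · exfalso; linarith [habs.1]
  · -- -k < s ≤ -1/k
    have hb : ∀ τ ∈ Set.uIoc (s - 1/(k:ℝ)) s, |f τ - f s| ≤ ε/2 := by
      intro τ hτ
      rw [Set.uIoc_of_le (by linarith)] at hτ
      obtain ⟨hτ1, hτ2⟩ := hτ
      have hτC : τ ∈ Set.Icc (-(M+2)) (M+2) := ⟨by linarith [habs.1], by linarith [habs.2]⟩
      have hd : dist τ s < δ := by
        rw [Real.dist_eq, abs_lt]
        constructor <;> linarith
      exact le_of_lt (by simpa [Real.dist_eq] using hδc τ hτC s hsC hd)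
    have h := avg_close f hf (s - 1/(k:ℝ)) s s (ε/2) hb
    have e1 : s - (s - 1/(k:ℝ)) = 1/(k:ℝ) := by ring
    rw [e1, abs_of_pos h1kpos] at h
    have key : -(k:ℝ) * ((∫ τ in (0:ℝ)..(s - 1/(k:ℝ)), f τ) - ∫ τ in (0:ℝ)..s, f τ) - f s
        = (k:ℝ) * ((∫ τ in (s - 1/(k:ℝ))..s, f τ) - 1/(k:ℝ) * f s) := by
      rw [← Gdiff f hf (s - 1/(k:ℝ)) s]
      field_simp
      ring
    rw [key, abs_mul, abs_of_pos hkpos]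
    have e2 : (k:ℝ) * (ε/2 * (1/(k:ℝ))) = ε/2 := by field_simp
    have := mul_le_mul_of_nonneg_left h (le_of_lt hkpos)
    linarith
  · -- -1/k < s ≤ 0
    push_neg at h2
    have hb : ∀ τ ∈ Set.uIoc (-(1/(k:ℝ))) (-(2/(k:ℝ))), ‖f τ‖ ≤ ε/2 := by
      intro τ hτ
      rw [Set.uIoc_of_ge (by linarith)] at hτ
      obtain ⟨hτ1, hτ2⟩ := hτ
      have hτC : τ ∈ Set.Icc (-(M+2)) (M+2) := ⟨by linarith, by linarith⟩
      have hd : dist τ 0 < δ := by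
        rw [Real.dist_eq, sub_zero, abs_lt]
        constructor <;> linarith
      have := hδc τ hτC 0 h0C hd
      rw [Real.dist_eq, hf0, sub_zero] at this
      simpa [Real.norm_eq_abs] using this.le
    have hGd := Gdiff f hf (-(1/(k:ℝ))) (-(2/(k:ℝ)))
    have hIb : |∫ τ in (-(1/(k:ℝ)))..(-(2/(k:ℝ))), f τ| ≤ ε/2 * (1/(k:ℝ)) := by
      have := intervalIntegral.norm_integral_le_of_norm_le_const hb
      have e : |(-(2/(k:ℝ))) - (-(1/(k:ℝ)))| = 1/(k:ℝ) := by
        rw [abs_of_nonpos (by linarith)]; ring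
      rw [e] at this
      simpa [Real.norm_eq_abs] using this
    rw [hGd]
    set I := ∫ τ in (-(1/(k:ℝ)))..(-(2/(k:ℝ))), f τ with hI
    have hfs : |f s| < ε/2 := by
      rcases eq_or_lt_of_le h3 with rfl | hslt
      · rw [hf0]; simpa using hε2
      · have hd : dist s 0 < δ := by
          rw [Real.dist_eq, sub_zero, abs_lt]
          constructor <;> linarith
        have := hδc s hsC 0 h0C hd
        rwa [Real.dist_eq, hf0, sub_zero] at this
    have habs1 : |(k:ℝ)^2 * s * I| ≤ ε/2 := by
      rw [abs_mul, abs_mul, abs_of_nonneg (by positivity : (0:ℝ) ≤ (k:ℝ)^2)]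
      have hsabs : |s| ≤ 1/(k:ℝ) := by rw [abs_le]; constructor <;> linarith
      calc (k:ℝ)^2 * |s| * |I| ≤ (k:ℝ)^2 * (1/(k:ℝ)) * (ε/2 * (1/(k:ℝ))) := by
            gcongr
        _ = ε/2 := by field_simp
    calc |(k:ℝ)^2 * s * I - f s| ≤ |(k:ℝ)^2 * s * I| + |f s| := abs_sub _ _
      _ < ε/2 + ε/2 := by linarith
      _ = ε := by ring
  · -- 0 < s ≤ 1/k
    push_neg at h3
    have hb : ∀ τ ∈ Set.uIoc (1/(k:ℝ)) (2/(k:ℝ)), ‖f τ‖ ≤ ε/2 := by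
      intro τ hτ
      rw [Set.uIoc_of_le (by linarith)] at hτ
      obtain ⟨hτ1, hτ2⟩ := hτ
      have hτC : τ ∈ Set.Icc (-(M+2)) (M+2) := ⟨by linarith, by linarith⟩
      have hd : dist τ 0 < δ := by
        rw [Real.dist_eq, sub_zero, abs_lt]
        constructor <;> linarith
      have := hδc τ hτC 0 h0C hd
      rw [Real.dist_eq, hf0, sub_zero] at this
      simpa [Real.norm_eq_abs] using this.le
    have hGd := Gdiff f hf (1/(k:ℝ)) (2/(k:ℝ))
    have hIb : |∫ τ in (1/(k:ℝ))..(2/(k:ℝ)), f τ| ≤ ε/2 * (1/(k:ℝ)) := by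
      have := intervalIntegral.norm_integral_le_of_norm_le_const hb
      have e : |(2/(k:ℝ)) - 1/(k:ℝ)| = 1/(k:ℝ) := by
        rw [abs_of_nonneg (by linarith)]; ring
      rw [e] at this
      simpa [Real.norm_eq_abs] using this
    rw [hGd]
    set I := ∫ τ in (1/(k:ℝ))..(2/(k:ℝ)), f τ with hI
    have hfs : |f s| < ε/2 := by
      have hd : dist s 0 < δ := by
        rw [Real.dist_eq, sub_zero, abs_lt]
        constructor <;> linarith
      have := hδc s hsC 0 h0C hd
      rwa [Real.dist_eq, hf0, sub_zero] at this
    have habs1 : |(k:ℝ)^2 * s * I| ≤ ε/2 := by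
      rw [abs_mul, abs_mul, abs_of_nonneg (by positivity : (0:ℝ) ≤ (k:ℝ)^2)]
      have hsabs : |s| ≤ 1/(k:ℝ) := by rw [abs_le]; constructor <;> linarith
      calc (k:ℝ)^2 * |s| * |I| ≤ (k:ℝ)^2 * (1/(k:ℝ)) * (ε/2 * (1/(k:ℝ))) := by
            gcongr
        _ = ε/2 := by field_simp
    calc |(k:ℝ)^2 * s * I - f s| ≤ |(k:ℝ)^2 * s * I| + |f s| := abs_sub _ _
      _ < ε/2 + ε/2 := by linarith
      _ = ε := by ring
  · -- 1/k < s ≤ k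
    push_neg at h4
    have hb : ∀ τ ∈ Set.uIoc s (s + 1/(k:ℝ)), |f τ - f s| ≤ ε/2 := by
      intro τ hτ
      rw [Set.uIoc_of_le (by linarith)] at hτ
      obtain ⟨hτ1, hτ2⟩ := hτ
      have hτC : τ ∈ Set.Icc (-(M+2)) (M+2) := ⟨by linarith [habs.1], by linarith [habs.2]⟩
      have hd : dist τ s < δ := by
        rw [Real.dist_eq, abs_lt]
        constructor <;> linarith
      exact le_of_lt (by simpa [Real.dist_eq] using hδc τ hτC s hsC hd)
    have h := avg_close f hf s (s + 1/(k:ℝ)) s (ε/2) hb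
    have e1 : s + 1/(k:ℝ) - s = 1/(k:ℝ) := by ring
    rw [e1, abs_of_pos h1kpos] at h
    have key : (k:ℝ) * ((∫ τ in (0:ℝ)..(s + 1/(k:ℝ)), f τ) - ∫ τ in (0:ℝ)..s, f τ) - f s
        = (k:ℝ) * ((∫ τ in s..(s + 1/(k:ℝ)), f τ) - 1/(k:ℝ) * f s) := by
      rw [Gdiff f hf s (s + 1/(k:ℝ))]
      field_simp
    rw [key, abs_mul, abs_of_pos hkpos]
    have e2 : (k:ℝ) * (ε/2 * (1/(k:ℝ))) = ε/2 := by field_simp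
    have := mul_le_mul_of_nonneg_left h (le_of_lt hkpos)
    linarith
  · exfalso; linarith [habs.2]
end
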